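/- arXiv:2111.06541 — 3 statements merged into one kernel-verified Lean document; each statement's English description precedes it below -/
import Mathlib

section
/- Let F = x² + y⁶ + z⁶ + xyzw ∈ ℂ[x,y,z,w]. The set of points (x,y,z,w) ∈ ℂ⁴ ∖ {(0,0,0,0)} at which all four partial derivatives ∂F/∂x = 2x + yzw, ∂F/∂y = 6y⁵ + xzw, ∂F/∂z = 6z⁵ + xyw, ∂F/∂w = xyz vanish is exactly {(0,0,0,w) : w ∈ ℂ, w ≠ 0}. (Consequently the hypersurface Z = {F = 0} in the quotient stack P = [(𝔸⁴∖{0})/Γ] has a unique singular point, namely [0:0:0:1].) -/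
/-! Since `xyz = 0`, one of `y`, `z` vanishes or `x` does; in the first two cases `∂F/∂x = 2x`,
so `x = 0` in all cases, and then `∂F/∂y = 6y⁵`, `∂F/∂z = 6z⁵` force `y = z = 0`. -/

lemma eq_zero_of_partials_eq_zero {R : Type*} [CommRing R] [IsDomain R] [CharZero R]
    {x y z w : R} (h1 : 2 * x + y * z * w = 0) (h2 : 6 * y ^ 5 + x * z * w = 0)
    (h3 : 6 * z ^ 5 + x * y * w = 0) (h4 : x * y * z = 0) : x = 0 ∧ y = 0 ∧ z = 0 := by
  have hx : x = 0 := by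
    rcases mul_eq_zero.mp h4 with hxy | hz
    · rcases mul_eq_zero.mp hxy with hx | hy
      · exact hx
      · simpa [hy] using h1
    · simpa [hz] using h1
  subst hx
  exact ⟨rfl, by simpa using h2, by simpa using h3⟩

/-- The critical locus of `F = x² + y⁶ + z⁶ + xyzw` away from the origin of `ℂ⁴`
is exactly the punctured `w`-axis `{(0,0,0,w) : w ≠ 0}`. -/
theorem degree_two_critical_locus :
    {p : ℂ × ℂ × ℂ × ℂ | p ≠ (0, 0, 0, 0) ∧
        2 * p.1 + p.2.1 * p.2.2.1 * p.2.2.2 = 0 ∧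
        6 * p.2.1 ^ 5 + p.1 * p.2.2.1 * p.2.2.2 = 0 ∧
        6 * p.2.2.1 ^ 5 + p.1 * p.2.1 * p.2.2.2 = 0 ∧
        p.1 * p.2.1 * p.2.2.1 = 0} =
      {p : ℂ × ℂ × ℂ × ℂ | p.1 = 0 ∧ p.2.1 = 0 ∧ p.2.2.1 = 0 ∧ p.2.2.2 ≠ 0} := by
  ext ⟨x, y, z, w⟩
  simp only [Set.mem_ofPred_eq, ne_eq, Prod.mk.injEq]
  constructor
  · rintro ⟨hne, h1, h2, h3, h4⟩
    obtain ⟨rfl, rfl, rfl⟩ := eq_zero_of_partials_eq_zero h1 h2 h3 h4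
    exact ⟨rfl, rfl, rfl, fun hw => hne ⟨rfl, rfl, rfl, hw⟩⟩
  · rintro ⟨rfl, rfl, rfl, hw⟩
    simp [hw]
end

section
/- Let G be the subgroup of (ℂˣ)³ consisting of all triples (α,β,γ) with α² = β⁶ = γ⁶ = αβγ, and let ζ ∈ ℂ be a primitive 6th root of unity. Then G is exactly the subgroup generated by the two elements (−1, 1, −1) and (1, ζ, ζ⁵); moreover G has order 12 and is isomorphic to ℤ/2 × ℤ/6. (This identifies the local quotient model at the singular point of Z in degree 2: the coarse moduli of the chart w ≠ 0 is 𝔸³/⟨(1/2)(1,0,1), (1/6)(0,1,5)⟩.) -/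
/-! Writing `x = β⁶`, the equations `α² = γ⁶ = αβγ` give `α = βγ`, and then
`x³ = (β²γ²)³ = β⁶γ⁶ = x²`, so `x = 1`; hence `α² = 1` and `γ = αβ⁻¹ = αβ⁵`. Thus `G` is the image
of `μ₂ × μ₆` under the injective homomorphism `(a, b) ↦ (a, b, ab⁵)`, which sends the generators
`(−1, 1)` and `(1, ζ)` of the cyclic factors to the two given triples. -/

open Subgroup

section CommGroup

variable {M : Type*} [CommGroup M]

theorem stabilizer_equations_iff {a b c : M} :
    a ^ 2 = b ^ 6 ∧ b ^ 6 = c ^ 6 ∧ c ^ 6 = a * b * c ↔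
      a ^ 2 = 1 ∧ b ^ 6 = 1 ∧ c = a * b ^ 5 := by
  constructor
  · rintro ⟨h₁, h₂, h₃⟩
    have ha : a = b * c := mul_left_cancel (a := a) <| by
      rw [← mul_assoc, ← h₃, ← h₂, ← h₁, sq]
    have hb : b ^ 6 = 1 := by
      refine (mul_left_cancel (a := b ^ 6 * b ^ 6) ?_).symm
      calc b ^ 6 * b ^ 6 * 1 = b ^ 6 * c ^ 6 := by rw [mul_one, ← h₂]
        _ = (a ^ 2) ^ 3 := by rw [ha, ← pow_mul, ← mul_pow]
        _ = b ^ 6 * b ^ 6 * b ^ 6 := by rw [h₁, pow_succ, sq]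
    refine ⟨h₁.trans hb, hb, ?_⟩
    rw [ha, mul_comm b, mul_assoc, ← pow_succ', hb, mul_one]
  · rintro ⟨ha, hb, rfl⟩
    have hc : (a * b ^ 5) ^ 6 = 1 := by
      rw [mul_pow, ← pow_mul, pow_mul' b, hb, one_pow, mul_one, show 6 = 2 * 3 from rfl, pow_mul,
        ha, one_pow]
    refine ⟨ha.trans hb.symm, hb.trans hc.symm, ?_⟩
    rw [hc, mul_mul_mul_comm, ← sq, ← pow_succ', ha, hb, one_mul]

variable (M) in
def tripleOfPair : M × M →* M × M × M :=
  (MonoidHom.fst M M).prod <| (MonoidHom.snd M M).prod <|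
    MonoidHom.fst M M * (powMonoidHom 5).comp (MonoidHom.snd M M)

@[simp]
theorem tripleOfPair_apply (p : M × M) : tripleOfPair M p = (p.1, p.2, p.1 * p.2 ^ 5) := rfl

theorem tripleOfPair_injective : Function.Injective (tripleOfPair M) :=
  fun _ _ h ↦ Prod.ext (congrArg (·.1) h :) (congrArg (·.2.1) h :)

theorem mem_map_tripleOfPair_prod {H K : Subgroup M} {g : M × M × M} :
    g ∈ (H.prod K).map (tripleOfPair M) ↔ g.1 ∈ H ∧ g.2.1 ∈ K ∧ g.2.2 = g.1 * g.2.1 ^ 5 := by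
  constructor
  · rintro ⟨p, ⟨hp₁, hp₂⟩, rfl⟩
    exact ⟨hp₁, hp₂, rfl⟩
  · rintro ⟨h₁, h₂, h₃⟩
    exact ⟨(g.1, g.2.1), ⟨h₁, h₂⟩, by simp only [tripleOfPair_apply, ← h₃]⟩

theorem closure_pair_eq_prod_zpowers (x y : M) :
    closure {(x, 1), (1, y)} = (zpowers x).prod (zpowers y) := by
  apply le_antisymm
  · rw [closure_le]
    rintro _ (rfl | rfl)
    exacts [⟨mem_zpowers x, one_mem _⟩, ⟨one_mem _, mem_zpowers y⟩]
  · rw [prod_le_iff, MonoidHom.map_zpowers, MonoidHom.map_zpowers, zpowers_le, zpowers_le]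
    exact ⟨subset_closure (by simp), subset_closure (by simp)⟩

theorem closure_generators_eq_map (x y : M) :
    closure {(x, 1, x), (1, y, y ^ 5)} = ((zpowers x).prod (zpowers y)).map (tripleOfPair M) := by
  rw [← closure_pair_eq_prod_zpowers, MonoidHom.map_closure, Set.image_pair]
  simp

end CommGroup

section CommRing

variable {R : Type*} [CommRing R] {ε u : Rˣ}

noncomputable def closureGeneratorsEquiv (hε : IsPrimitiveRoot ε 2) (hu : IsPrimitiveRoot u 6) :
    closure {(ε, 1, ε), (1, u, u ^ 5)} ≃* Multiplicative (ZMod 2) × Multiplicative (ZMod 6) :=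
  (MulEquiv.subgroupCongr (closure_generators_eq_map ε u)).trans <|
    (equivMapOfInjective _ _ tripleOfPair_injective).symm.trans <|
      (prodEquiv _ _).trans <|
        (AddEquiv.toMultiplicativeLeft hε.zmodEquivZPowers).symm.prodCongr
          (AddEquiv.toMultiplicativeLeft hu.zmodEquivZPowers).symm

theorem mem_closure_generators_iff [IsDomain R] (hε : IsPrimitiveRoot ε 2)
    (hu : IsPrimitiveRoot u 6) (g : Rˣ × Rˣ × Rˣ) :
    g ∈ closure {(ε, 1, ε), (1, u, u ^ 5)} ↔
      g.1 ^ 2 = g.2.1 ^ 6 ∧ g.2.1 ^ 6 = g.2.2 ^ 6 ∧ g.2.2 ^ 6 = g.1 * g.2.1 * g.2.2 := by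
  rw [closure_generators_eq_map, mem_map_tripleOfPair_prod, hε.zpowers_eq, hu.zpowers_eq,
    mem_rootsOfUnity, mem_rootsOfUnity, stabilizer_equations_iff]

end CommRing

/-- The stabilizer group `G = {(α,β,γ) ∈ (ℂˣ)³ : α² = β⁶ = γ⁶ = αβγ}` is exactly the
subgroup generated by `(−1, 1, −1)` and `(1, ζ, ζ⁵)` (where `ζ` is a primitive 6th root
of unity), has order 12, and is isomorphic to `ℤ/2 × ℤ/6`. -/
theorem degree_two_stabilizer_group (ζ : ℂ) (hζ : IsPrimitiveRoot ζ 6)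
    (u : ℂˣ) (hu : (u : ℂ) = ζ) :
    (∀ g : ℂˣ × ℂˣ × ℂˣ,
        g ∈ Subgroup.closure
            ({((-1 : ℂˣ), (1 : ℂˣ), (-1 : ℂˣ)), ((1 : ℂˣ), u, u ^ 5)} : Set (ℂˣ × ℂˣ × ℂˣ)) ↔
          (g.1 : ℂ) ^ 2 = (g.2.1 : ℂ) ^ 6 ∧ (g.2.1 : ℂ) ^ 6 = (g.2.2 : ℂ) ^ 6 ∧
            (g.2.2 : ℂ) ^ 6 = (g.1 : ℂ) * (g.2.1 : ℂ) * (g.2.2 : ℂ)) ∧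
    Nat.card (Subgroup.closure
        ({((-1 : ℂˣ), (1 : ℂˣ), (-1 : ℂˣ)), ((1 : ℂˣ), u, u ^ 5)} : Set (ℂˣ × ℂˣ × ℂˣ))) = 12 ∧
    Nonempty ((Subgroup.closure
        ({((-1 : ℂˣ), (1 : ℂˣ), (-1 : ℂˣ)), ((1 : ℂˣ), u, u ^ 5)} : Set (ℂˣ × ℂˣ × ℂˣ))) ≃*
      Multiplicative (ZMod 2) × Multiplicative (ZMod 6)) := by
  have hε : IsPrimitiveRoot (-1 : ℂˣ) 2 :=
    IsPrimitiveRoot.coe_units_iff.mp <| by simpa using IsPrimitiveRoot.neg_one 0 two_ne_zero.symm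
  have hu₆ : IsPrimitiveRoot u 6 := IsPrimitiveRoot.coe_units_iff.mp (hu ▸ hζ)
  let e := closureGeneratorsEquiv hε hu₆
  refine ⟨fun g ↦ ?_, ?_, ⟨e⟩⟩
  · simp only [mem_closure_generators_iff hε hu₆, ← Units.val_pow_eq_pow_val, ← Units.val_mul,
      Units.val_inj]
  · rw [Nat.card_congr e.toEquiv]
    simp
end

section
/- Let f = x⁵ + y⁵ + z⁵ + xyz ∈ ℂ[x,y,z]. The only point (x,y,z) ∈ ℂ³ at which f and all three of its partial derivatives ∂f/∂x = 5x⁴ + yz, ∂f/∂y = 5y⁴ + xz, ∂f/∂z = 5z⁴ + xy vanish simultaneously is the origin (0,0,0). (Hence the hypersurface S = {f = 0} is smooth away from the origin; note that the three partial derivatives alone do admit common zeros away from the origin, so the hypothesis f = 0 is essential.) -/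
/-!
Euler's identity `x f_x + y f_y + z f_z = 5 f - 2xyz` forces `xyz = 0` at a singular point of
`f = x⁵ + y⁵ + z⁵ + xyz`. Once one coordinate vanishes, the other two partials reduce to `5w⁴`,
so the remaining coordinates vanish as well. Without `f = 0` the diagonal point `(w, w, w)` with
`5w² + 1 = 0` is a common zero of the partials.
-/

section Singular

variable {R : Type*} [CommRing R] [IsDomain R] [CharZero R] {x y z : R}

theorem mul_mul_eq_zero_of_singular (h0 : x ^ 5 + y ^ 5 + z ^ 5 + x * y * z = 0)
    (hx : 5 * x ^ 4 + y * z = 0) (hy : 5 * y ^ 4 + x * z = 0) (hz : 5 * z ^ 4 + x * y = 0) :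
    x * y * z = 0 := by
  have h : 2 * (x * y * z) = 0 := by linear_combination 5 * h0 - x * hx - y * hy - z * hz
  exact (mul_eq_zero.mp h).resolve_left two_ne_zero

theorem eq_zero_of_singular (h0 : x ^ 5 + y ^ 5 + z ^ 5 + x * y * z = 0)
    (hx : 5 * x ^ 4 + y * z = 0) (hy : 5 * y ^ 4 + x * z = 0) (hz : 5 * z ^ 4 + x * y = 0) :
    x = 0 ∧ y = 0 ∧ z = 0 := by
  rcases mul_eq_zero.mp (mul_mul_eq_zero_of_singular h0 hx hy hz) with hxy | rfl
  · rcases mul_eq_zero.mp hxy with rfl | rfl <;> simp_all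
  · simp_all

end Singular

theorem diagonal_critical_of_five_mul_sq_add_one {R : Type*} [CommRing R] {w : R}
    (hw : 5 * w ^ 2 + 1 = 0) : 5 * w ^ 4 + w * w = 0 := by
  linear_combination w ^ 2 * hw

/-- The only common zero of `f = x⁵ + y⁵ + z⁵ + xyz` and its three partial derivatives
is the origin; moreover the three partial derivatives alone do admit a common zero away
from the origin, so the hypothesis `f = 0` is essential. -/
theorem genus_two_mirror_singular_locus :
    (∀ x y z : ℂ,
        (x ^ 5 + y ^ 5 + z ^ 5 + x * y * z = 0 ∧
          5 * x ^ 4 + y * z = 0 ∧ 5 * y ^ 4 + x * z = 0 ∧ 5 * z ^ 4 + x * y = 0) ↔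
        (x = 0 ∧ y = 0 ∧ z = 0)) ∧
    (∃ x y z : ℂ, (x, y, z) ≠ (0, 0, 0) ∧
        5 * x ^ 4 + y * z = 0 ∧ 5 * y ^ 4 + x * z = 0 ∧ 5 * z ^ 4 + x * y = 0) := by
  refine ⟨fun x y z => ⟨fun ⟨h0, hx, hy, hz⟩ => eq_zero_of_singular h0 hx hy hz, ?_⟩, ?_⟩
  · rintro ⟨rfl, rfl, rfl⟩
    norm_num
  · obtain ⟨w, hw⟩ := IsAlgClosed.exists_pow_nat_eq (-(1 / 5) : ℂ) two_pos
    have hw0 : w ≠ 0 := by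
      rintro rfl
      norm_num at hw
    have hcrit := diagonal_critical_of_five_mul_sq_add_one (w := w) (by linear_combination 5 * hw)
    exact ⟨w, w, w, by simp [hw0], hcrit, hcrit, hcrit⟩
end
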